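/- Let Q ⊆ (0,1) be a countable dense set (e.g., the rationals in (0,1)), let (w_q)_{q∈Q} be positive weights summing to 1, and let ρ := ∑_{q∈Q} w_q μ_q be the corresponding mixture of Bernoulli i.i.d. measures. Then for every p ∈ (0,1), (1/n) d_n(μ_p, ρ) → 0 as n → ∞. -/
import Mathlib


open MeasureTheory Filter Real
open scoped ENNReal

/-- The cylinder set of all infinite sequences starting with the string `s`. -/
def cyl {X : Type*} [MeasurableSpace X] {n : ℕ} (s : Fin n → X) : Set (ℕ → X) :=
  {x | ∀ i : Fin n, x i = s i}

/-- The expected cumulative KL divergence between `μ` and `ρ` restricted to the first `n`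
observations. -/
noncomputable def dKL {X : Type*} [Fintype X] [MeasurableSpace X]
    (μ ρ : Measure (ℕ → X)) (n : ℕ) : ℝ :=
  -∑ s : Fin n → X, (μ (cyl s)).toReal * Real.logb 2 ((ρ (cyl s)).toReal / (μ (cyl s)).toReal)

private lemma sum_cons {n : ℕ} (F : (Fin (n+1) → Bool) → ℝ) :
    ∑ s : Fin (n+1) → Bool, F s = ∑ b : Bool, ∑ s : Fin n → Bool, F (Fin.cons b s) := by
  rw [← Fintype.sum_prod_type (f := fun x : Bool × (Fin n → Bool) => F (Fin.cons x.1 x.2))]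
  exact (Fintype.sum_equiv (Fin.consEquiv fun _ => Bool) _ _ fun x => rfl).symm

private lemma L1 (f : Bool → ℝ) : ∀ n : ℕ,
    ∑ s : Fin n → Bool, ∏ i, f (s i) = (f false + f true) ^ n
  | 0 => by simp
  | (n+1) => by
    rw [sum_cons (fun s => ∏ i, f (s i))]
    have e1 : ∀ (b : Bool) (s : Fin n → Bool),
        ∏ i : Fin (n+1), f ((Fin.cons b s : Fin (n+1) → Bool) i)
          = f b * ∏ i : Fin n, f (s i) := by
      intro b s; rw [Fin.prod_univ_succ]; simp
    simp_rw [e1, ← Finset.mul_sum]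
    rw [L1 f n, Fintype.sum_bool]
    ring

private lemma L2 (f h : Bool → ℝ) (hf : f false + f true = 1) : ∀ n : ℕ,
    ∑ s : Fin n → Bool, (∏ i, f (s i)) * (∑ i, h (s i))
      = n * (f false * h false + f true * h true)
  | 0 => by simp
  | (n+1) => by
    rw [sum_cons (fun s => (∏ i, f (s i)) * (∑ i, h (s i)))]
    have e1 : ∀ (b : Bool) (s : Fin n → Bool),
        (∏ i : Fin (n+1), f ((Fin.cons b s : Fin (n+1) → Bool) i))
            * (∑ i : Fin (n+1), h ((Fin.cons b s : Fin (n+1) → Bool) i))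
          = f b * h b * (∏ i : Fin n, f (s i))
            + f b * ((∏ i : Fin n, f (s i)) * (∑ i : Fin n, h (s i))) := by
      intro b s; rw [Fin.prod_univ_succ, Fin.sum_univ_succ]; simp; ring
    simp_rw [e1, Finset.sum_add_distrib, ← Finset.mul_sum]
    rw [L1 f n, L2 f h hf n, hf, one_pow]
    simp only [Fintype.sum_bool]
    push_cast
    linear_combination ((n : ℝ) * (f false * h false + f true * h true)) * hf

private lemma L1' (a b : ℝ) (n : ℕ) :
    ∑ s : Fin n → Bool, ∏ i, (if s i = false then a else b) = (a + b) ^ n := by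
  simpa using L1 (fun x => if x = false then a else b) n

private lemma L2' (a b c d : ℝ) (hab : a + b = 1) (n : ℕ) :
    ∑ s : Fin n → Bool,
        (∏ i, (if s i = false then a else b)) * (∑ i, (if s i = false then c else d))
      = n * (a * c + b * d) := by
  simpa using L2 (fun x => if x = false then a else b)
    (fun x => if x = false then c else d) (by simpa) n

private lemma cyl_meas {n : ℕ} (s : Fin n → Bool) : MeasurableSet (cyl s) := by
  have : cyl s = ⋂ i : Fin n, (fun x : ℕ → Bool => x i) ⁻¹' {s i} := by
    ext x; simp [cyl]
  rw [this]
  exact MeasurableSet.iInter fun i =>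
    (measurable_pi_apply (i : ℕ)) (measurableSet_singleton _)

private lemma cyl_disj {n : ℕ} :
    Set.PairwiseDisjoint (↑(Finset.univ : Finset (Fin n → Bool))) (fun s : Fin n → Bool => cyl s) := by
  intro s _ t _ hst
  rw [Function.onFun, Set.disjoint_left]
  intro x hxs hxt
  exact hst (funext fun i => (hxs i).symm.trans (hxt i))

/-- A countable mixture of Bernoulli i.i.d. measures whose parameters `q k` form a dense subset
of `(0,1)` predicts every Bernoulli i.i.d. measure `μ_p`, `p ∈ (0,1)`, in expected average KL
divergence (`false` plays the role of `0`). -/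
theorem stmt18 (q : ℕ → ℝ) (hq : ∀ k, q k ∈ Set.Ioo (0 : ℝ) 1)
    (hdense : ∀ p ∈ Set.Ioo (0 : ℝ) 1, ∀ ε : ℝ, 0 < ε → ∃ k, |q k - p| < ε)
    (w : ℕ → ℝ≥0∞) (hw : ∀ k, 0 < w k) (hw1 : ∑' k, w k = 1)
    (νq : ℕ → Measure (ℕ → Bool)) (hνq : ∀ k, IsProbabilityMeasure (νq k))
    (hcyl : ∀ (k : ℕ) (n : ℕ) (s : Fin n → Bool),
      ((νq k) (cyl s)).toReal = ∏ i : Fin n, (if s i = false then q k else 1 - q k))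
    (p : ℝ) (hp : p ∈ Set.Ioo (0 : ℝ) 1)
    (μp : Measure (ℕ → Bool)) [IsProbabilityMeasure μp]
    (hμp : ∀ (n : ℕ) (s : Fin n → Bool),
      (μp (cyl s)).toReal = ∏ i : Fin n, (if s i = false then p else 1 - p)) :
    Tendsto (fun n : ℕ => dKL μp (Measure.sum fun k => w k • νq k) n / n) atTop (nhds 0) := by
  obtain ⟨hp0, hp1⟩ := hp
  have hp1' : 0 < 1 - p := by linarith
  set ρ := Measure.sum fun k => w k • νq k with hρdef
  have hνuniv : ∀ k, νq k Set.univ = 1 := fun k => (hνq k).measure_univ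
  have hρuniv : ρ Set.univ = 1 := by
    rw [hρdef, Measure.sum_apply _ MeasurableSet.univ]
    simp only [Measure.smul_apply, smul_eq_mul, hνuniv, mul_one]
    exact hw1
  haveI hρprob : IsProbabilityMeasure ρ := ⟨hρuniv⟩
  have hwle : ∀ k, w k ≤ 1 := fun k => hw1 ▸ ENNReal.le_tsum k
  have hwne : ∀ k, w k ≠ ⊤ := fun k => ((hwle k).trans_lt ENNReal.one_lt_top).ne
  have hwpos : ∀ k, 0 < (w k).toReal := fun k => ENNReal.toReal_pos (hw k).ne' (hwne k)
  have hFpos : ∀ {n : ℕ} (s : Fin n → Bool),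
      0 < ∏ i, (if s i = false then p else 1 - p) := by
    intro n s
    apply Finset.prod_pos
    intro i _
    by_cases hsi : s i = false <;> simp [hsi] <;> linarith
  have hGpos : ∀ (k : ℕ) {n : ℕ} (s : Fin n → Bool),
      0 < ∏ i, (if s i = false then q k else 1 - q k) := by
    intro k n s
    apply Finset.prod_pos
    intro i _
    by_cases hsi : s i = false <;> simp [hsi] <;> linarith [(hq k).1, (hq k).2]
  have hρapply : ∀ {n : ℕ} (s : Fin n → Bool),
      ρ (cyl s) = ∑' k, w k * νq k (cyl s) := by
    intro n s
    rw [hρdef, Measure.sum_apply _ (cyl_meas s)]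
    simp only [Measure.smul_apply, smul_eq_mul]
  have hρlb : ∀ (k : ℕ) {n : ℕ} (s : Fin n → Bool),
      (w k).toReal * (νq k (cyl s)).toReal ≤ (ρ (cyl s)).toReal := by
    intro k n s
    rw [← ENNReal.toReal_mul]
    refine ENNReal.toReal_mono (measure_ne_top ρ _) ?_
    rw [hρapply s]
    exact ENNReal.le_tsum k
  have hρpos : ∀ {n : ℕ} (s : Fin n → Bool), 0 < (ρ (cyl s)).toReal := by
    intro n s
    refine lt_of_lt_of_le ?_ (hρlb 0 s)
    exact mul_pos (hwpos 0) (by rw [hcyl]; exact hGpos 0 s)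
  have hμpos : ∀ {n : ℕ} (s : Fin n → Bool), 0 < (μp (cyl s)).toReal := by
    intro n s; rw [hμp]; exact hFpos s
  have hsumF : ∀ n : ℕ, ∑ s : Fin n → Bool, (μp (cyl s)).toReal = 1 := by
    intro n
    simp_rw [hμp]
    rw [L1' p (1 - p) n]
    norm_num
  have hsumρ : ∀ n : ℕ, ∑ s : Fin n → Bool, (ρ (cyl s)).toReal ≤ 1 := by
    intro n
    have h1 : ∑ s : Fin n → Bool, ρ (cyl s) ≤ 1 := by
      rw [← measure_biUnion_finset cyl_disj (fun s _ => cyl_meas s), ← hρuniv]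
      exact measure_mono (Set.subset_univ _)
    calc ∑ s : Fin n → Bool, (ρ (cyl s)).toReal
        = (∑ s : Fin n → Bool, ρ (cyl s)).toReal :=
          (ENNReal.toReal_sum (fun s _ => measure_ne_top ρ _)).symm
      _ ≤ (1 : ℝ≥0∞).toReal := ENNReal.toReal_mono ENNReal.one_ne_top h1
      _ = 1 := ENNReal.toReal_one
  have hlog2 : (0 : ℝ) < Real.log 2 := Real.log_pos one_lt_two
  -- Gibbs: nonnegativity of dKL
  have hd0 : ∀ n : ℕ, 0 ≤ dKL μp ρ n := by
    intro n
    rw [dKL, neg_nonneg]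
    have hterm : ∀ s : Fin n → Bool,
        (μp (cyl s)).toReal * Real.logb 2 ((ρ (cyl s)).toReal / (μp (cyl s)).toReal)
          ≤ ((ρ (cyl s)).toReal - (μp (cyl s)).toReal) / Real.log 2 := by
      intro s
      have hA : 0 < (μp (cyl s)).toReal := hμpos s
      have hR : 0 < (ρ (cyl s)).toReal := hρpos s
      rw [Real.logb, ← mul_div_assoc]
      gcongr
      have hlog := Real.log_le_sub_one_of_pos (div_pos hR hA)
      calc (μp (cyl s)).toReal * Real.log ((ρ (cyl s)).toReal / (μp (cyl s)).toReal)
          ≤ (μp (cyl s)).toReal * ((ρ (cyl s)).toReal / (μp (cyl s)).toReal - 1) := by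
            exact mul_le_mul_of_nonneg_left hlog hA.le
        _ = (ρ (cyl s)).toReal - (μp (cyl s)).toReal := by field_simp
    have hsub : ∑ s : Fin n → Bool, ((ρ (cyl s)).toReal - (μp (cyl s)).toReal) ≤ 0 := by
      rw [Finset.sum_sub_distrib, hsumF n]
      linarith [hsumρ n]
    calc ∑ s : Fin n → Bool,
          (μp (cyl s)).toReal * Real.logb 2 ((ρ (cyl s)).toReal / (μp (cyl s)).toReal)
        ≤ ∑ s : Fin n → Bool,
            ((ρ (cyl s)).toReal - (μp (cyl s)).toReal) / Real.log 2 :=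
          Finset.sum_le_sum fun s _ => hterm s
      _ = (∑ s : Fin n → Bool, ((ρ (cyl s)).toReal - (μp (cyl s)).toReal)) / Real.log 2 :=
          (Finset.sum_div _ _ _).symm
      _ ≤ 0 := div_nonpos_of_nonpos_of_nonneg hsub hlog2.le
  -- exact value of the KL sum against a single Bernoulli component
  have hkey : ∀ (k n : ℕ),
      ∑ s : Fin n → Bool, (μp (cyl s)).toReal *
          Real.logb 2 ((νq k (cyl s)).toReal / (μp (cyl s)).toReal)
        = n * (p * Real.logb 2 (q k / p)
            + (1 - p) * Real.logb 2 ((1 - q k) / (1 - p))) := by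
    intro k n
    have step : ∀ s : Fin n → Bool,
        (μp (cyl s)).toReal * Real.logb 2 ((νq k (cyl s)).toReal / (μp (cyl s)).toReal)
          = (∏ i, (if s i = false then p else 1 - p)) *
              (∑ i, (if s i = false then Real.logb 2 (q k / p)
                     else Real.logb 2 ((1 - q k) / (1 - p)))) := by
      intro s
      rw [hμp, hcyl]
      congr 1
      have hne : ∀ i ∈ (Finset.univ : Finset (Fin n)),
          ((if s i = false then q k else 1 - q k) / (if s i = false then p else 1 - p)) ≠ 0 := by
        intro i _
        have h1 : 0 < (if s i = false then q k else 1 - q k) := by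
          by_cases hsi : s i = false <;> simp [hsi] <;> linarith [(hq k).1, (hq k).2]
        have h2 : 0 < (if s i = false then p else 1 - p) := by
          by_cases hsi : s i = false <;> simp [hsi] <;> linarith
        positivity
      rw [← Finset.prod_div_distrib, Real.logb_prod _ _ hne]
      apply Finset.sum_congr rfl
      intro i _
      by_cases hsi : s i = false <;> simp [hsi]
    simp_rw [step]
    rw [L2' p (1 - p) _ _ (by ring) n]
  -- upper bound on dKL via a single component of the mixture
  have hub : ∀ (k n : ℕ), dKL μp ρ n
      ≤ -Real.logb 2 (w k).toReal
        - (n : ℝ) * (p * Real.logb 2 (q k / p)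
            + (1 - p) * Real.logb 2 ((1 - q k) / (1 - p))) := by
    intro k n
    have hterm : ∀ s : Fin n → Bool,
        (μp (cyl s)).toReal * (Real.logb 2 (w k).toReal
            + Real.logb 2 ((νq k (cyl s)).toReal / (μp (cyl s)).toReal))
          ≤ (μp (cyl s)).toReal *
              Real.logb 2 ((ρ (cyl s)).toReal / (μp (cyl s)).toReal) := by
      intro s
      have hA : 0 < (μp (cyl s)).toReal := hμpos s
      have hG : 0 < (νq k (cyl s)).toReal := by rw [hcyl]; exact hGpos k s
      have h1 : Real.logb 2 (w k).toReal
            + Real.logb 2 ((νq k (cyl s)).toReal / (μp (cyl s)).toReal)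
          = Real.logb 2 ((w k).toReal * (νq k (cyl s)).toReal / (μp (cyl s)).toReal) := by
        rw [mul_div_assoc, Real.logb_mul (hwpos k).ne' (by positivity)]
      rw [h1]
      apply mul_le_mul_of_nonneg_left _ hA.le
      apply Real.logb_le_logb_of_le one_lt_two (div_pos (mul_pos (hwpos k) hG) hA)
      gcongr
      exact hρlb k s
    have hsum := Finset.sum_le_sum (fun s (_ : s ∈ (Finset.univ : Finset (Fin n → Bool))) => hterm s)
    have hleft : ∑ s : Fin n → Bool, (μp (cyl s)).toReal * (Real.logb 2 (w k).toReal
          + Real.logb 2 ((νq k (cyl s)).toReal / (μp (cyl s)).toReal))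
        = Real.logb 2 (w k).toReal
          + n * (p * Real.logb 2 (q k / p)
              + (1 - p) * Real.logb 2 ((1 - q k) / (1 - p))) := by
      simp_rw [mul_add]
      rw [Finset.sum_add_distrib, ← Finset.sum_mul, hsumF n, one_mul, hkey k n]
      ring
    rw [hleft] at hsum
    rw [dKL]
    linarith [hsum]
  -- continuity of the per-symbol divergence at p
  have hφcont : ContinuousAt (fun x : ℝ =>
      -(p * Real.logb 2 (x / p) + (1 - p) * Real.logb 2 ((1 - x) / (1 - p)))) p := by
    have c1 : ContinuousAt (fun x : ℝ => Real.logb 2 (x / p)) p := by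
      have hg : ContinuousAt (fun x : ℝ => x / p) p := continuousAt_id.div_const p
      have hf : ContinuousAt (Real.logb 2) (p / p) := by
        rw [div_self hp0.ne']
        exact Real.continuousAt_logb one_ne_zero
      exact ContinuousAt.comp (g := Real.logb 2)
        (f := fun x : ℝ => x / p) (x := p) hf hg
    have c2 : ContinuousAt (fun x : ℝ => Real.logb 2 ((1 - x) / (1 - p))) p := by
      have hg : ContinuousAt (fun x : ℝ => (1 - x) / (1 - p)) p :=
        (continuousAt_const.sub continuousAt_id).div_const _
      have hf : ContinuousAt (Real.logb 2) ((1 - p) / (1 - p)) := by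
        rw [div_self hp1'.ne']
        exact Real.continuousAt_logb one_ne_zero
      exact ContinuousAt.comp (g := Real.logb 2)
        (f := fun x : ℝ => (1 - x) / (1 - p)) (x := p) hf hg
    exact ((continuousAt_const.mul c1).add (continuousAt_const.mul c2)).neg
  have hφp0 : -(p * Real.logb 2 (p / p) + (1 - p) * Real.logb 2 ((1 - p) / (1 - p))) = 0 := by
    rw [div_self hp0.ne', div_self hp1'.ne', Real.logb_one]
    ring
  rw [Metric.tendsto_atTop]
  intro ε hε
  obtain ⟨δ, hδpos, hδ⟩ := Metric.continuousAt_iff.mp hφcont (ε / 2) (half_pos hε)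
  obtain ⟨k, hk⟩ := hdense p ⟨hp0, hp1⟩ δ hδpos
  have hφk : |-(p * Real.logb 2 (q k / p)
      + (1 - p) * Real.logb 2 ((1 - q k) / (1 - p)))| < ε / 2 := by
    have h := hδ (x := q k) (by rwa [Real.dist_eq])
    simp only [Real.dist_eq] at h
    rwa [hφp0, sub_zero] at h
  obtain ⟨N, hN⟩ := exists_nat_gt (2 * |Real.logb 2 (w k).toReal| / ε)
  have hN' : 2 * |Real.logb 2 (w k).toReal| < N * ε := (div_lt_iff₀ hε).mp hN
  refine ⟨N + 1, fun n hn => ?_⟩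
  have hn1 : (1 : ℕ) ≤ n := le_trans (Nat.le_add_left 1 N) hn
  have hnpos : (0 : ℝ) < n := by exact_mod_cast Nat.pos_of_ne_zero (by omega)
  have hge : ((N : ℝ) + 1) ≤ n := by exact_mod_cast hn
  have hdk0 : 0 ≤ dKL μp ρ n / n := div_nonneg (hd0 n) hnpos.le
  rw [Real.dist_eq, sub_zero, abs_of_nonneg hdk0]
  have h2 : dKL μp ρ n / n
      ≤ -Real.logb 2 (w k).toReal / n
        + -(p * Real.logb 2 (q k / p)
            + (1 - p) * Real.logb 2 ((1 - q k) / (1 - p))) := by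
    calc dKL μp ρ n / n
        ≤ (-Real.logb 2 (w k).toReal
            - (n : ℝ) * (p * Real.logb 2 (q k / p)
              + (1 - p) * Real.logb 2 ((1 - q k) / (1 - p)))) / n := by
          gcongr
          exact hub k n
      _ = -Real.logb 2 (w k).toReal / n
          + -(p * Real.logb 2 (q k / p)
              + (1 - p) * Real.logb 2 ((1 - q k) / (1 - p))) := by
          field_simp
          ring
  have hCn : -Real.logb 2 (w k).toReal / n < ε / 2 := by
    rw [div_lt_iff₀ hnpos]
    have habs : -Real.logb 2 (w k).toReal ≤ |Real.logb 2 (w k).toReal| :=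
      neg_le_abs _
    nlinarith [abs_nonneg (Real.logb 2 (w k).toReal)]
  have hE : -(p * Real.logb 2 (q k / p)
      + (1 - p) * Real.logb 2 ((1 - q k) / (1 - p))) < ε / 2 :=
    lt_of_le_of_lt (le_abs_self _) hφk
  linarith
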